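/- arXiv:2605.04136 — 3 statements merged into one kernel-verified Lean document; each statement's English description precedes it below -/
import Mathlib

section
/- Let g₁,…,g_m and Δg₁,…,Δg_m be N×N complex Hermitian matrices, set g̃ⱼ := gⱼ + Δgⱼ, and let ε_g := maxⱼ ‖Δgⱼ‖ (spectral norm). Assume ε_g < κ(g). Then every pair (y, μ) with y ∈ ℝ^m and μ ∈ ℝ satisfying the perturbed constraint ‖Σⱼ yⱼ g̃ⱼ + μ I‖ ≤ 1/2 obeys ‖y‖₁ ≤ 1/(2 (κ(g) − ε_g)). -/
open scoped BigOperators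

/-- The spectral norm (ℓ²-operator norm) of a complex matrix. -/
noncomputable def specNorm {n : Type*} [Fintype n] [DecidableEq n]
    (A : Matrix n n ℂ) : ℝ :=
  ‖Matrix.toEuclideanCLM (𝕜 := ℂ) A‖

/-- The conditioning constant `κ(g)`: the infimum over real vectors `y` with `‖y‖₁ = 1` and
real `μ` of the spectral norm `‖Σⱼ yⱼ gⱼ + μ I‖`. -/
noncomputable def kappa {N m : ℕ} (g : Fin m → Matrix (Fin N) (Fin N) ℂ) : ℝ :=
  sInf {c : ℝ | ∃ (y : Fin m → ℝ) (μ : ℝ), (∑ j, |y j|) = 1 ∧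
    c = specNorm (∑ j, y j • g j + μ • (1 : Matrix (Fin N) (Fin N) ℂ))}

lemma specNorm_nonneg {n : Type*} [Fintype n] [DecidableEq n] (A : Matrix n n ℂ) :
    0 ≤ specNorm A := norm_nonneg _

set_option synthInstance.maxHeartbeats 1000000 in
lemma specNorm_smul_real {n : Type*} [Fintype n] [DecidableEq n] (c : ℝ) (A : Matrix n n ℂ) :
    specNorm (c • A) = |c| * specNorm A := by
  have h : c • A = (c : ℂ) • A := (Complex.coe_smul c A).symm
  rw [specNorm, h, map_smul,
    norm_smul (c : ℂ) (Matrix.toEuclideanCLM (𝕜 := ℂ) A),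
    Complex.norm_real, Real.norm_eq_abs, specNorm]

set_option synthInstance.maxHeartbeats 1000000 in
lemma specNorm_sub_le {n : Type*} [Fintype n] [DecidableEq n] (A B : Matrix n n ℂ) :
    specNorm (A - B) ≤ specNorm A + specNorm B := by
  simpa [specNorm, map_sub] using norm_sub_le (Matrix.toEuclideanCLM (𝕜 := ℂ) A)
    (Matrix.toEuclideanCLM (𝕜 := ℂ) B)

/-- Bounded dual multipliers for the perturbed problem: with `g̃ⱼ = gⱼ + Δgⱼ` and
`ε_g = maxⱼ ‖Δgⱼ‖ < κ(g)`, every `(y, μ)` satisfying the perturbed dual constraint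
`‖Σⱼ yⱼ g̃ⱼ + μ I‖ ≤ 1/2` obeys `‖y‖₁ ≤ 1/(2 (κ(g) − ε_g))`. -/
theorem bounded_dual_multipliers_perturbed {N m : ℕ} (hm : 0 < m)
    (g Δg : Fin m → Matrix (Fin N) (Fin N) ℂ)
    (hg : ∀ j, (g j).IsHermitian) (hΔg : ∀ j, (Δg j).IsHermitian)
    (εg : ℝ)
    (hεg : εg = Finset.univ.sup' (Finset.univ_nonempty_iff.mpr (Fin.pos_iff_nonempty.mp hm))
      (fun j => specNorm (Δg j)))
    (hlt : εg < kappa g)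
    (y : Fin m → ℝ) (μ : ℝ)
    (hfeas : specNorm (∑ j, y j • (g j + Δg j) + μ • (1 : Matrix (Fin N) (Fin N) ℂ)) ≤ 1 / 2) :
    ∑ j, |y j| ≤ 1 / (2 * (kappa g - εg)) := by
  set κ := kappa g with hκ
  have hpos : 0 < κ - εg := by linarith
  set s := ∑ j, |y j| with hs
  have hsnn : 0 ≤ s := Finset.sum_nonneg fun j _ => abs_nonneg _
  rcases eq_or_lt_of_le hsnn with h0 | hspos
  · rw [← h0]; positivity
  -- bound on each Δg j
  have hΔbound : ∀ j, specNorm (Δg j) ≤ εg := by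
    intro j
    rw [hεg]
    exact Finset.le_sup' (fun j => specNorm (Δg j)) (Finset.mem_univ j)
  -- bound on ∑ y j • Δg j
  have hD : specNorm (∑ j, y j • Δg j) ≤ s * εg := by
    rw [specNorm, map_sum]
    calc ‖∑ j, Matrix.toEuclideanCLM (𝕜 := ℂ) (y j • Δg j)‖
        ≤ ∑ j, ‖Matrix.toEuclideanCLM (𝕜 := ℂ) (y j • Δg j)‖ := norm_sum_le _ _
      _ ≤ ∑ j, |y j| * εg := by
          apply Finset.sum_le_sum
          intro j _
          have : ‖Matrix.toEuclideanCLM (𝕜 := ℂ) (y j • Δg j)‖ = |y j| * specNorm (Δg j) :=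
            specNorm_smul_real (y j) (Δg j)
          rw [this]
          exact mul_le_mul_of_nonneg_left (hΔbound j) (abs_nonneg _)
      _ = s * εg := by rw [← Finset.sum_mul]
  -- the unperturbed combination
  have hsplit : (∑ j, y j • g j + μ • (1 : Matrix (Fin N) (Fin N) ℂ)) =
      (∑ j, y j • (g j + Δg j) + μ • (1 : Matrix (Fin N) (Fin N) ℂ)) - ∑ j, y j • Δg j := by
    simp only [smul_add, Finset.sum_add_distrib]
    abel
  have hunpert : specNorm (∑ j, y j • g j + μ • (1 : Matrix (Fin N) (Fin N) ℂ))
      ≤ 1 / 2 + s * εg := by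
    rw [hsplit]
    exact le_trans (specNorm_sub_le _ _) (add_le_add hfeas hD)
  -- κ is at most the norm of the normalized combination
  have hκle : κ ≤ s⁻¹ * (1 / 2 + s * εg) := by
    have hmem : specNorm (∑ j, (y j / s) • g j + (μ / s) • (1 : Matrix (Fin N) (Fin N) ℂ)) ∈
        {c : ℝ | ∃ (y : Fin m → ℝ) (μ : ℝ), (∑ j, |y j|) = 1 ∧
          c = specNorm (∑ j, y j • g j + μ • (1 : Matrix (Fin N) (Fin N) ℂ))} := by
      refine ⟨fun j => y j / s, μ / s, ?_, rfl⟩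
      have : ∑ j, |y j / s| = (∑ j, |y j|) / s := by
        rw [Finset.sum_div]
        apply Finset.sum_congr rfl
        intro j _
        rw [abs_div, abs_of_pos hspos]
      rw [this, ← hs, div_self hspos.ne']
    have hbdd : BddBelow {c : ℝ | ∃ (y : Fin m → ℝ) (μ : ℝ), (∑ j, |y j|) = 1 ∧
        c = specNorm (∑ j, y j • g j + μ • (1 : Matrix (Fin N) (Fin N) ℂ))} := by
      refine ⟨0, ?_⟩
      rintro c ⟨y', μ', _, rfl⟩
      exact specNorm_nonneg _
    have h1 : κ ≤ specNorm (∑ j, (y j / s) • g j + (μ / s) • (1 : Matrix (Fin N) (Fin N) ℂ)) :=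
      csInf_le hbdd hmem
    have heq : (∑ j, (y j / s) • g j + (μ / s) • (1 : Matrix (Fin N) (Fin N) ℂ)) =
        s⁻¹ • (∑ j, y j • g j + μ • (1 : Matrix (Fin N) (Fin N) ℂ)) := by
      rw [smul_add, Finset.smul_sum]
      congr 1
      · apply Finset.sum_congr rfl
        intro j _
        rw [smul_smul, div_eq_inv_mul]
      · rw [smul_smul, div_eq_inv_mul]
    rw [heq, specNorm_smul_real, abs_of_pos (inv_pos.mpr hspos)] at h1
    exact le_trans h1 (mul_le_mul_of_nonneg_left hunpert (inv_nonneg.mpr hsnn))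
  have h1 : s * κ ≤ 1 / 2 + s * εg := by
    calc s * κ ≤ s * (s⁻¹ * (1 / 2 + s * εg)) :=
          mul_le_mul_of_nonneg_left hκle hsnn
      _ = 1 / 2 + s * εg := by field_simp
  rw [le_div_iff₀ (by positivity)]
  nlinarith [h1]
end

section
/- Let g₁,…,g_m and Δg₁,…,Δg_m be N×N complex Hermitian matrices with g̃ⱼ := gⱼ + Δgⱼ, and let α, Δα ∈ ℝ^m with α̃ := α + Δα. Set ε_g := maxⱼ ‖Δgⱼ‖ (spectral norm), ε_α := ‖Δα‖_∞, κ := κ(g), γ := γ(g|α), γ̃ := γ(g̃|α̃). Assume κ > 0 and ε_g ≤ κ/2. Then |γ̃ − γ| ≤ (2γ/κ) · ε_g + ε_α/κ. -/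
open scoped BigOperators

/-- The dual value `γ(g|α)`: the supremum of `Σⱼ αⱼ yⱼ` over all `y` for which there exists
`μ` with `‖Σⱼ yⱼ gⱼ + μ I‖ ≤ 1/2` in spectral norm. -/
noncomputable def gammaVal {N m : ℕ} (g : Fin m → Matrix (Fin N) (Fin N) ℂ)
    (α : Fin m → ℝ) : ℝ :=
  sSup {c : ℝ | ∃ (y : Fin m → ℝ) (μ : ℝ),
    specNorm (∑ j, y j • g j + μ • (1 : Matrix (Fin N) (Fin N) ℂ)) ≤ 1 / 2 ∧
    c = ∑ j, α j * y j}

set_option maxHeartbeats 1000000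
set_option synthInstance.maxHeartbeats 1000000

lemma specNorm_smul {n : Type*} [Fintype n] [DecidableEq n] (r : ℝ) (A : Matrix n n ℂ) :
    specNorm (r • A) = |r| * specNorm A := by
  unfold specNorm
  rw [← algebraMap_smul ℂ r A, map_smul]
  rw [show (algebraMap ℝ ℂ) r = (r:ℂ) from rfl,
    norm_smul (r:ℂ) (Matrix.toEuclideanCLM (𝕜 := ℂ) A)]
  simp

lemma specNorm_add_le {n : Type*} [Fintype n] [DecidableEq n] (A B : Matrix n n ℂ) :
    specNorm (A + B) ≤ specNorm A + specNorm B := by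
  unfold specNorm; rw [map_add]; exact norm_add_le _ _

lemma specNorm_zero {n : Type*} [Fintype n] [DecidableEq n] :
    specNorm (0 : Matrix n n ℂ) = 0 := by
  unfold specNorm; rw [map_zero]; exact norm_zero

lemma specNorm_sum_le {m : ℕ} {n : Type*} [Fintype n] [DecidableEq n]
    (f : Fin m → Matrix n n ℂ) :
    specNorm (∑ j, f j) ≤ ∑ j, specNorm (f j) := by
  unfold specNorm; rw [map_sum]; exact norm_sum_le _ _

lemma kappa_mul_le {N m : ℕ} (g : Fin m → Matrix (Fin N) (Fin N) ℂ)
    (y : Fin m → ℝ) (μ : ℝ) :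
    kappa g * (∑ j, |y j|) ≤
      specNorm (∑ j, y j • g j + μ • (1 : Matrix (Fin N) (Fin N) ℂ)) := by
  set s := ∑ j, |y j| with hs
  have hs0 : 0 ≤ s := Finset.sum_nonneg fun j _ => abs_nonneg _
  rcases hs0.eq_or_lt with h | h
  · rw [← h, mul_zero]; exact specNorm_nonneg _
  · have hbdd : BddBelow {c : ℝ | ∃ (y : Fin m → ℝ) (μ : ℝ), (∑ j, |y j|) = 1 ∧
        c = specNorm (∑ j, y j • g j + μ • (1 : Matrix (Fin N) (Fin N) ℂ))} := by
      refine ⟨0, ?_⟩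
      rintro c ⟨y', μ', -, rfl⟩
      exact specNorm_nonneg _
    have hmat : (∑ j, (s⁻¹ * y j) • g j + (s⁻¹ * μ) • (1 : Matrix (Fin N) (Fin N) ℂ)) =
        s⁻¹ • (∑ j, y j • g j + μ • (1 : Matrix (Fin N) (Fin N) ℂ)) := by
      rw [smul_add, Finset.smul_sum]
      simp [smul_smul]
    have hmem : specNorm (∑ j, (s⁻¹ * y j) • g j +
        (s⁻¹ * μ) • (1 : Matrix (Fin N) (Fin N) ℂ)) ∈ {c : ℝ | ∃ (y : Fin m → ℝ) (μ : ℝ),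
        (∑ j, |y j|) = 1 ∧
        c = specNorm (∑ j, y j • g j + μ • (1 : Matrix (Fin N) (Fin N) ℂ))} := by
      refine ⟨fun j => s⁻¹ * y j, s⁻¹ * μ, ?_, rfl⟩
      simp only [abs_mul, abs_of_pos (inv_pos.mpr h), ← Finset.mul_sum, ← hs]
      exact inv_mul_cancel₀ h.ne'
    have hle := csInf_le hbdd hmem
    rw [hmat, specNorm_smul, abs_of_pos (inv_pos.mpr h)] at hle
    have h2 := mul_le_mul_of_nonneg_right hle h.le
    rw [mul_comm s⁻¹ _, mul_assoc, inv_mul_cancel₀ h.ne', mul_one] at h2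
    exact h2

lemma specNorm_shift {N m : ℕ} (P Q : Fin m → Matrix (Fin N) (Fin N) ℂ)
    (y : Fin m → ℝ) (μ εg : ℝ) (hPQ : ∀ j, specNorm (P j - Q j) ≤ εg) :
    specNorm (∑ j, y j • Q j + μ • (1 : Matrix (Fin N) (Fin N) ℂ)) ≤
      specNorm (∑ j, y j • P j + μ • (1 : Matrix (Fin N) (Fin N) ℂ)) + (∑ j, |y j|) * εg := by
  have key : (∑ j, y j • Q j + μ • (1 : Matrix (Fin N) (Fin N) ℂ)) =
      (∑ j, y j • P j + μ • (1 : Matrix (Fin N) (Fin N) ℂ)) + ∑ j, y j • (Q j - P j) := by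
    have h1 : ∀ j ∈ Finset.univ, y j • Q j = y j • P j + y j • (Q j - P j) := fun j _ => by
      rw [smul_sub]; abel
    rw [Finset.sum_congr rfl h1, Finset.sum_add_distrib]; abel
  rw [key]
  refine le_trans (specNorm_add_le _ _) (add_le_add_right ?_ _)
  calc specNorm (∑ j, y j • (Q j - P j)) ≤ ∑ j, specNorm (y j • (Q j - P j)) :=
        specNorm_sum_le _
  _ ≤ ∑ j, |y j| * εg := by
      refine Finset.sum_le_sum fun j _ => ?_
      rw [specNorm_smul]
      refine mul_le_mul_of_nonneg_left ?_ (abs_nonneg _)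
      have : Q j - P j = -(P j - Q j) := by abel
      rw [this, show specNorm (-(P j - Q j)) = specNorm (P j - Q j) from ?_]
      · exact hPQ j
      · have := specNorm_smul (-1 : ℝ) (P j - Q j)
        simpa using this
  _ = (∑ j, |y j|) * εg := by rw [Finset.sum_mul]

lemma l1_bound {N m : ℕ} (g P : Fin m → Matrix (Fin N) (Fin N) ℂ)
    (εg : ℝ) (hPg : ∀ j, specNorm (P j - g j) ≤ εg)
    (hκ : 0 < kappa g) (hle : εg ≤ kappa g / 2)
    (y : Fin m → ℝ) (μ : ℝ)
    (hfeas : specNorm (∑ j, y j • P j + μ • (1 : Matrix (Fin N) (Fin N) ℂ)) ≤ 1/2) :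
    (∑ j, |y j|) ≤ 1 / kappa g := by
  have h1 := kappa_mul_le g y μ
  have h2 := specNorm_shift P g y μ εg hPg
  set s := ∑ j, |y j| with hs
  have hs0 : 0 ≤ s := Finset.sum_nonneg fun j _ => abs_nonneg _
  have h3 : s * εg ≤ s * (kappa g / 2) := mul_le_mul_of_nonneg_left hle hs0
  rw [le_div_iff₀ hκ]
  nlinarith [h1, h2, h3, hfeas]

lemma zero_mem_gammaSet {N m : ℕ} (g : Fin m → Matrix (Fin N) (Fin N) ℂ)
    (α : Fin m → ℝ) :
    (0:ℝ) ∈ {c : ℝ | ∃ (y : Fin m → ℝ) (μ : ℝ),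
      specNorm (∑ j, y j • g j + μ • (1 : Matrix (Fin N) (Fin N) ℂ)) ≤ 1 / 2 ∧
      c = ∑ j, α j * y j} := by
  refine ⟨0, 0, ?_, by simp⟩
  have : (∑ j, (0:Fin m → ℝ) j • g j + (0:ℝ) • (1 : Matrix (Fin N) (Fin N) ℂ)) = 0 := by
    simp
  rw [this, specNorm_zero]; norm_num

lemma bddAbove_gammaSet {N m : ℕ} (g P : Fin m → Matrix (Fin N) (Fin N) ℂ)
    (α : Fin m → ℝ) (εg : ℝ) (hPg : ∀ j, specNorm (P j - g j) ≤ εg)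
    (hκ : 0 < kappa g) (hle : εg ≤ kappa g / 2) :
    BddAbove {c : ℝ | ∃ (y : Fin m → ℝ) (μ : ℝ),
      specNorm (∑ j, y j • P j + μ • (1 : Matrix (Fin N) (Fin N) ℂ)) ≤ 1 / 2 ∧
      c = ∑ j, α j * y j} := by
  refine ⟨(∑ j, |α j|) * (1 / kappa g), ?_⟩
  rintro c ⟨y, μ, hfeas, rfl⟩
  have hsb : (∑ j, |y j|) ≤ 1 / kappa g := l1_bound g P εg hPg hκ hle y μ hfeas
  have hA0 : 0 ≤ ∑ j, |α j| := Finset.sum_nonneg fun j _ => abs_nonneg _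
  calc (∑ j, α j * y j) ≤ ∑ j, |α j| * (∑ k, |y k|) := by
        refine Finset.sum_le_sum fun j _ => ?_
        calc α j * y j ≤ |α j * y j| := le_abs_self _
        _ = |α j| * |y j| := abs_mul _ _
        _ ≤ |α j| * (∑ k, |y k|) := by
            refine mul_le_mul_of_nonneg_left ?_ (abs_nonneg _)
            exact Finset.single_le_sum (fun k _ => abs_nonneg (y k)) (Finset.mem_univ j)
  _ = (∑ j, |α j|) * (∑ k, |y k|) := by rw [Finset.sum_mul]
  _ ≤ (∑ j, |α j|) * (1 / kappa g) := mul_le_mul_of_nonneg_left hsb hA0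

lemma gamma_dir {N m : ℕ} (g P Q : Fin m → Matrix (Fin N) (Fin N) ℂ)
    (αP αQ : Fin m → ℝ) (εg εα : ℝ)
    (hεg : 0 ≤ εg) (hεα : 0 ≤ εα)
    (hκ : 0 < kappa g) (hle : εg ≤ kappa g / 2)
    (hPg : ∀ j, specNorm (P j - g j) ≤ εg)
    (hQg : ∀ j, specNorm (Q j - g j) ≤ εg)
    (hPQ : ∀ j, specNorm (P j - Q j) ≤ εg)
    (hβ : ∀ j, |αP j - αQ j| ≤ εα) :
    gammaVal P αP ≤ gammaVal Q αQ + 2 * gammaVal Q αQ / kappa g * εg + εα / kappa g := by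
  have hQbdd := bddAbove_gammaSet g Q αQ εg hQg hκ hle
  have hQ0 : 0 ≤ gammaVal Q αQ := le_csSup hQbdd (zero_mem_gammaSet Q αQ)
  set γQ := gammaVal Q αQ with hγQ
  unfold gammaVal
  refine csSup_le ⟨0, zero_mem_gammaSet P αP⟩ ?_
  rintro c ⟨y, μ, hfeas, rfl⟩
  set s := ∑ j, |y j| with hs
  have hs0 : 0 ≤ s := Finset.sum_nonneg fun j _ => abs_nonneg _
  have hsb : s ≤ 1 / kappa g := l1_bound g P εg hPg hκ hle y μ hfeas
  have hd0 : (0:ℝ) < 1 + 2 * εg * s := by nlinarith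
  set t := (1 + 2 * εg * s)⁻¹ with ht
  have ht0 : 0 < t := inv_pos.mpr hd0
  -- the scaled vector is feasible for Q
  have hshift := specNorm_shift P Q y μ εg hPQ
  have hmat : (∑ j, (t * y j) • Q j + (t * μ) • (1 : Matrix (Fin N) (Fin N) ℂ)) =
      t • (∑ j, y j • Q j + μ • (1 : Matrix (Fin N) (Fin N) ℂ)) := by
    rw [smul_add, Finset.smul_sum]
    simp [smul_smul]
  have hfeasQ : specNorm (∑ j, (t * y j) • Q j +
      (t * μ) • (1 : Matrix (Fin N) (Fin N) ℂ)) ≤ 1 / 2 := by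
    rw [hmat, specNorm_smul, abs_of_pos ht0]
    have h1 : specNorm (∑ j, y j • Q j + μ • (1 : Matrix (Fin N) (Fin N) ℂ)) ≤
        1/2 + s * εg := by
      calc _ ≤ specNorm (∑ j, y j • P j + μ • (1 : Matrix (Fin N) (Fin N) ℂ)) + s * εg :=
            hshift
      _ ≤ 1/2 + s * εg := by linarith
    calc t * specNorm (∑ j, y j • Q j + μ • (1 : Matrix (Fin N) (Fin N) ℂ)) ≤
          t * (1/2 + s * εg) := mul_le_mul_of_nonneg_left h1 ht0.le
    _ = (1/2 + s * εg) / (1 + 2 * εg * s) := by rw [ht]; ring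
    _ ≤ 1/2 := by
        rw [div_le_iff₀ hd0]; nlinarith
  have hmem : (∑ j, αQ j * (t * y j)) ∈ {c : ℝ | ∃ (y : Fin m → ℝ) (μ : ℝ),
      specNorm (∑ j, y j • Q j + μ • (1 : Matrix (Fin N) (Fin N) ℂ)) ≤ 1 / 2 ∧
      c = ∑ j, αQ j * y j} := ⟨fun j => t * y j, t * μ, hfeasQ, rfl⟩
  have hsup : (∑ j, αQ j * (t * y j)) ≤ γQ := le_csSup hQbdd hmem
  have hpull : (∑ j, αQ j * (t * y j)) = t * ∑ j, αQ j * y j := by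
    rw [Finset.mul_sum]; exact Finset.sum_congr rfl fun j _ => by ring
  rw [hpull] at hsup
  -- hence Σ αQ y ≤ γQ (1 + 2 εg s)
  have h4 : (∑ j, αQ j * y j) ≤ γQ * (1 + 2 * εg * s) := by
    have := mul_le_mul_of_nonneg_left hsup hd0.le
    rw [← mul_assoc, mul_inv_cancel₀ hd0.ne', one_mul] at this
    linarith [this]
  -- bound the α-perturbation term
  have h5 : (∑ j, αP j * y j) ≤ (∑ j, αQ j * y j) + εα * s := by
    have : ∀ j ∈ Finset.univ, αP j * y j ≤ αQ j * y j + εα * |y j| := fun j _ => by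
      have h6 : (αP j - αQ j) * y j ≤ εα * |y j| := by
        calc (αP j - αQ j) * y j ≤ |(αP j - αQ j) * y j| := le_abs_self _
        _ = |αP j - αQ j| * |y j| := abs_mul _ _
        _ ≤ εα * |y j| := mul_le_mul_of_nonneg_right (hβ j) (abs_nonneg _)
      nlinarith [h6]
    calc (∑ j, αP j * y j) ≤ ∑ j, (αQ j * y j + εα * |y j|) := Finset.sum_le_sum this
    _ = (∑ j, αQ j * y j) + εα * s := by rw [Finset.sum_add_distrib, ← Finset.mul_sum]
  -- final arithmetic
  have h7 : γQ * (2 * εg * s) ≤ 2 * γQ / kappa g * εg := by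
    have h8 : γQ * (2 * εg) * s ≤ γQ * (2 * εg) * (1 / kappa g) :=
      mul_le_mul_of_nonneg_left hsb (by positivity)
    calc γQ * (2 * εg * s) = γQ * (2 * εg) * s := by ring
    _ ≤ γQ * (2 * εg) * (1 / kappa g) := h8
    _ = 2 * γQ / kappa g * εg := by field_simp
  have h9 : εα * s ≤ εα / kappa g := by
    have := mul_le_mul_of_nonneg_left hsb hεα
    calc εα * s ≤ εα * (1 / kappa g) := this
    _ = εα / kappa g := by ring
  calc (∑ j, αP j * y j) ≤ (∑ j, αQ j * y j) + εα * s := h5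
  _ ≤ γQ * (1 + 2 * εg * s) + εα * s := by linarith
  _ = γQ + γQ * (2 * εg * s) + εα * s := by ring
  _ ≤ γQ + 2 * γQ / kappa g * εg + εα / kappa g := by linarith

/-- Simplified error bound for γ when `ε_g ≤ κ/2`: `|γ̃ − γ| ≤ (2γ/κ) ε_g + ε_α/κ`. -/
theorem gamma_perturb_small {N m : ℕ} (hm : 0 < m)
    (g Δg : Fin m → Matrix (Fin N) (Fin N) ℂ)
    (hg : ∀ j, (g j).IsHermitian) (hΔg : ∀ j, (Δg j).IsHermitian)
    (α Δα : Fin m → ℝ) (εg εα : ℝ)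
    (hεg : εg = Finset.univ.sup' (Finset.univ_nonempty_iff.mpr (Fin.pos_iff_nonempty.mp hm))
      (fun j => specNorm (Δg j)))
    (hεα : εα = Finset.univ.sup' (Finset.univ_nonempty_iff.mpr (Fin.pos_iff_nonempty.mp hm))
      (fun j => |Δα j|))
    (hκ : 0 < kappa g) (hle : εg ≤ kappa g / 2) :
    |gammaVal (fun j => g j + Δg j) (fun j => α j + Δα j) - gammaVal g α| ≤
      (2 * gammaVal g α / kappa g) * εg + εα / kappa g := by
  have j0 : Fin m := ⟨0, hm⟩
  have hΔle : ∀ j, specNorm (Δg j) ≤ εg := fun j => by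
    rw [hεg]; exact Finset.le_sup' (fun j => specNorm (Δg j)) (Finset.mem_univ j)
  have hΔαle : ∀ j, |Δα j| ≤ εα := fun j => by
    rw [hεα]; exact Finset.le_sup' (fun j => |Δα j|) (Finset.mem_univ j)
  have hεg0 : 0 ≤ εg := le_trans (specNorm_nonneg (Δg j0)) (hΔle j0)
  have hεα0 : 0 ≤ εα := le_trans (abs_nonneg (Δα j0)) (hΔαle j0)
  have hP : ∀ j, specNorm ((g j + Δg j) - g j) ≤ εg := fun j => by
    rw [add_sub_cancel_left]; exact hΔle j
  have hQ : ∀ j, specNorm (g j - g j) ≤ εg := fun j => by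
    rw [sub_self, specNorm_zero]; exact hεg0
  have hPQ' : ∀ j, specNorm (g j - (g j + Δg j)) ≤ εg := fun j => by
    have h1 : g j - (g j + Δg j) = (-1 : ℝ) • (Δg j) := by
      rw [neg_one_smul]; abel
    rw [h1, specNorm_smul]
    simpa using hΔle j
  have hβ1 : ∀ j, |(α j + Δα j) - α j| ≤ εα := fun j => by
    rw [add_sub_cancel_left]; exact hΔαle j
  have hβ2 : ∀ j, |α j - (α j + Δα j)| ≤ εα := fun j => by
    rw [abs_sub_comm, add_sub_cancel_left]; exact hΔαle j
  have dir1 := gamma_dir g (fun j => g j + Δg j) g (fun j => α j + Δα j) α εg εα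
    hεg0 hεα0 hκ hle hP hQ hP hβ1
  have dir2 := gamma_dir g g (fun j => g j + Δg j) α (fun j => α j + Δα j) εg εα
    hεg0 hεα0 hκ hle hQ hP hPQ' hβ2
  have hγ0 : 0 ≤ gammaVal g α :=
    le_csSup (bddAbove_gammaSet g g α εg hQ hκ hle) (zero_mem_gammaSet g α)
  have hγt0 : 0 ≤ gammaVal (fun j => g j + Δg j) (fun j => α j + Δα j) :=
    le_csSup (bddAbove_gammaSet g (fun j => g j + Δg j) (fun j => α j + Δα j) εg hP hκ hle)
      (zero_mem_gammaSet _ _)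
  set γ := gammaVal g α
  set γ' := gammaVal (fun j => g j + Δg j) (fun j => α j + Δα j)
  rw [abs_sub_le_iff]
  constructor
  · linarith [dir1]
  · rcases le_total γ' γ with h | h
    · have hmono : 2 * γ' / kappa g * εg ≤ 2 * γ / kappa g * εg := by
        gcongr
      linarith [dir2, hmono]
    · have hrhs : 0 ≤ 2 * γ / kappa g * εg + εα / kappa g := by positivity
      linarith
end

section
/- Let g₁ = Z ⊗ I, g₂ = X ⊗ I, g₃ = Z ⊗ Z be the 4×4 Hermitian matrices given by Kronecker products of the 2×2 Pauli matrices X, Z and the 2×2 identity I. Then for every α ∈ ℝ³, the supremum of α₁y₁ + α₂y₂ + α₃y₃ over all y ∈ ℝ³ for which there exists μ ∈ ℝ with spectral norm ‖y₁ g₁ + y₂ g₂ + y₃ g₃ + μ I₄‖ ≤ 1/2 equals (1/2)·√(α₂² + (max(|α₁|, |α₃|))²). -/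
open scoped BigOperators Kronecker

/-- The Pauli matrix `X`. -/
def pauliX : Matrix (Fin 2) (Fin 2) ℂ := !![0, 1; 1, 0]

/-- The Pauli matrix `Z`. -/
def pauliZ : Matrix (Fin 2) (Fin 2) ℂ := !![1, 0; 0, -1]

open Matrix
open scoped Matrix.Norms.L2Operator

namespace TwoQubitAux

noncomputable def Amat (y₁ y₂ y₃ μ : ℝ) : Matrix (Fin 2 × Fin 2) (Fin 2 × Fin 2) ℂ :=
  y₁ • (pauliZ ⊗ₖ (1 : Matrix (Fin 2) (Fin 2) ℂ)) +
  y₂ • (pauliX ⊗ₖ (1 : Matrix (Fin 2) (Fin 2) ℂ)) +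
  y₃ • (pauliZ ⊗ₖ pauliZ) +
  μ • (1 : Matrix (Fin 2 × Fin 2) (Fin 2 × Fin 2) ℂ)

lemma specNorm_eq (A : Matrix (Fin 2 × Fin 2) (Fin 2 × Fin 2) ℂ) : specNorm A = ‖A‖ := rfl

lemma col_bound (y₁ y₂ y₃ μ : ℝ) (h : specNorm (Amat y₁ y₂ y₃ μ) ≤ 1/2) (k j : Fin 2) :
    ‖(EuclideanSpace.equiv (Fin 2 × Fin 2) ℂ).symm
      ((Amat y₁ y₂ y₃ μ) *ᵥ (EuclideanSpace.single (k, j) (1:ℂ) :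
        EuclideanSpace ℂ (Fin 2 × Fin 2)))‖ ≤ 1 / 2 := by
  have h1 := Matrix.l2_opNorm_mulVec (Amat y₁ y₂ y₃ μ)
    (EuclideanSpace.single (k, j) (1:ℂ))
  rw [EuclideanSpace.norm_single] at h1
  rw [specNorm_eq] at h
  simpa using h1.trans (by simpa using h)

lemma sq_le_of_sqrt_le {S : ℝ} (hS : 0 ≤ S) (h : Real.sqrt S ≤ 1/2) : S ≤ 1/4 := by
  nlinarith [Real.sq_sqrt hS, Real.sqrt_nonneg S]

lemma blocks (y₁ y₂ y₃ μ : ℝ) (h : specNorm (Amat y₁ y₂ y₃ μ) ≤ 1/2) :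
    (y₁ + y₃) ^ 2 + y₂ ^ 2 ≤ 1/4 ∧ (y₁ - y₃) ^ 2 + y₂ ^ 2 ≤ 1/4 := by
  have c00 := col_bound y₁ y₂ y₃ μ h 0 0
  have c10 := col_bound y₁ y₂ y₃ μ h 1 0
  have c01 := col_bound y₁ y₂ y₃ μ h 0 1
  have c11 := col_bound y₁ y₂ y₃ μ h 1 1
  rw [EuclideanSpace.norm_eq] at c00 c10 c01 c11
  simp [Amat, Matrix.mulVec, dotProduct, Fintype.sum_prod_type, Fin.sum_univ_two,
      pauliX, pauliZ, Matrix.one_apply, EuclideanSpace.single_apply] at c00 c10 c01 c11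
  norm_num [← Complex.ofReal_neg, ← Complex.ofReal_add, Complex.norm_real]
    at c00 c10 c01 c11
  constructor
  · have h1 := sq_le_of_sqrt_le (by positivity) c00
    have h2 := sq_le_of_sqrt_le (by positivity) c10
    nlinarith [h1, h2, sq_nonneg μ]
  · have h1 := sq_le_of_sqrt_le (by positivity) c01
    have h2 := sq_le_of_sqrt_le (by positivity) c11
    nlinarith [h1, h2, sq_nonneg μ]

lemma cs_half (M a t u s : ℝ) (hM : 0 ≤ M) (ha : 0 ≤ a) (ht : 0 ≤ t) (hu : 0 ≤ u)
    (hs0 : 0 ≤ s) (hs2 : s ^ 2 = a ^ 2 + M ^ 2) (hb : t ^ 2 + u ^ 2 ≤ 1/4) :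
    M * t + a * u ≤ 1/2 * s := by
  nlinarith [sq_nonneg (M * u - a * t), mul_nonneg hM ht, mul_nonneg ha hu,
    sq_nonneg (M * t + a * u - 1/2 * s), mul_nonneg (mul_nonneg hM ht) hs0,
    mul_nonneg (mul_nonneg ha hu) hs0]

lemma key_ineq (α₁ α₂ α₃ y₁ y₂ y₃ : ℝ)
    (hp : (y₁ + y₃) ^ 2 + y₂ ^ 2 ≤ 1/4) (hm : (y₁ - y₃) ^ 2 + y₂ ^ 2 ≤ 1/4) :
    α₁ * y₁ + α₂ * y₂ + α₃ * y₃ ≤ 1 / 2 * Real.sqrt (α₂ ^ 2 + max |α₁| |α₃| ^ 2) := by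
  have hM0 : 0 ≤ max |α₁| |α₃| := le_trans (abs_nonneg _) (le_max_left _ _)
  have htb : (|y₁| + |y₃|) ^ 2 + y₂ ^ 2 ≤ 1/4 := by
    rcases le_or_gt 0 (y₁ * y₃) with hc | hc
    · have h : |y₁| * |y₃| = y₁ * y₃ := by rw [← abs_mul, abs_of_nonneg hc]
      nlinarith [sq_abs y₁, sq_abs y₃]
    · have h : |y₁| * |y₃| = -(y₁ * y₃) := by rw [← abs_mul, abs_of_neg hc]
      nlinarith [sq_abs y₁, sq_abs y₃]
  have step2 : max |α₁| |α₃| * (|y₁| + |y₃|) + |α₂| * |y₂| ≤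
      1/2 * Real.sqrt (α₂ ^ 2 + max |α₁| |α₃| ^ 2) := by
    have h2 : |y₂| ^ 2 = y₂ ^ 2 := sq_abs _
    refine cs_half _ _ _ _ _ hM0 (abs_nonneg _) (by positivity) (abs_nonneg _)
      (Real.sqrt_nonneg _) ?_ (by rw [h2]; exact htb)
    rw [Real.sq_sqrt (by positivity), sq_abs]
  have h1 : α₁ * y₁ ≤ max |α₁| |α₃| * |y₁| := by
    calc α₁ * y₁ ≤ |α₁ * y₁| := le_abs_self _
      _ = |α₁| * |y₁| := abs_mul _ _
      _ ≤ _ := by gcongr; exact le_max_left _ _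
  have h3 : α₃ * y₃ ≤ max |α₁| |α₃| * |y₃| := by
    calc α₃ * y₃ ≤ |α₃ * y₃| := le_abs_self _
      _ = |α₃| * |y₃| := abs_mul _ _
      _ ≤ _ := by gcongr; exact le_max_right _ _
  have h2 : α₂ * y₂ ≤ |α₂| * |y₂| := (le_abs_self _).trans (abs_mul _ _).le
  nlinarith [h1, h2, h3, step2]

lemma ZZ : pauliZ * pauliZ = 1 := by
  norm_num [pauliZ, Matrix.mul_fin_two]
  exact Matrix.one_fin_two.symm

lemma XX : pauliX * pauliX = 1 := by
  norm_num [pauliX, Matrix.mul_fin_two]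
  exact Matrix.one_fin_two.symm

lemma anticomm : pauliZ * pauliX + pauliX * pauliZ = 0 := by
  norm_num [pauliX, pauliZ, Matrix.mul_fin_two]
  ext i j; fin_cases i <;> fin_cases j <;> simp

lemma norm_half (A : Matrix (Fin 2 × Fin 2) (Fin 2 × Fin 2) ℂ)
    (h1 : Aᴴ = A) (h2 : A * A = ((1:ℂ)/4) • 1) : specNorm A ≤ 1/2 := by
  have hone : ‖(1 : Matrix (Fin 2 × Fin 2) (Fin 2 × Fin 2) ℂ)‖ = 1 := by
    rw [Matrix.cstar_norm_def, _root_.map_one]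
    exact norm_one
  have key : ‖A‖ * ‖A‖ = 1/4 := by
    rw [← Matrix.l2_opNorm_conjTranspose_mul_self, h1, h2, norm_smul, hone]
    simp
  have h0 : (0:ℝ) ≤ ‖A‖ := norm_nonneg _
  have hA : specNorm A = ‖A‖ := rfl
  rw [hA]
  nlinarith

lemma witness1 (c₁ c₂ : ℝ) (h : c₁ ^ 2 + c₂ ^ 2 = 1/4) :
    specNorm (Amat c₁ c₂ 0 0) ≤ 1/2 := by
  unfold Amat
  rw [zero_smul, zero_smul, add_zero, add_zero]
  apply norm_half
  · rw [conjTranspose_add, conjTranspose_smul, conjTranspose_smul]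
    congr 1
    · congr 1
      ext ⟨i,j⟩ ⟨k,l⟩
      fin_cases i <;> fin_cases j <;> fin_cases k <;> fin_cases l <;>
        simp [Matrix.conjTranspose_apply, pauliZ, Matrix.one_apply]
    · congr 1
      ext ⟨i,j⟩ ⟨k,l⟩
      fin_cases i <;> fin_cases j <;> fin_cases k <;> fin_cases l <;>
        simp [Matrix.conjTranspose_apply, pauliX, Matrix.one_apply]
  · have e1 : (pauliZ ⊗ₖ (1 : Matrix (Fin 2) (Fin 2) ℂ)) * (pauliZ ⊗ₖ 1) = 1 := by
      rw [← Matrix.mul_kronecker_mul, ZZ, mul_one, Matrix.one_kronecker_one]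
    have e2 : (pauliX ⊗ₖ (1 : Matrix (Fin 2) (Fin 2) ℂ)) * (pauliX ⊗ₖ 1) = 1 := by
      rw [← Matrix.mul_kronecker_mul, XX, mul_one, Matrix.one_kronecker_one]
    have e3 : (pauliZ ⊗ₖ (1 : Matrix (Fin 2) (Fin 2) ℂ)) * (pauliX ⊗ₖ 1) +
        (pauliX ⊗ₖ (1 : Matrix (Fin 2) (Fin 2) ℂ)) * (pauliZ ⊗ₖ 1) = 0 := by
      rw [← Matrix.mul_kronecker_mul, ← Matrix.mul_kronecker_mul, mul_one,
        ← Matrix.add_kronecker, anticomm, Matrix.zero_kronecker]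
    have expand : (c₁ • (pauliZ ⊗ₖ (1 : Matrix (Fin 2) (Fin 2) ℂ)) + c₂ • (pauliX ⊗ₖ 1)) *
        (c₁ • (pauliZ ⊗ₖ (1 : Matrix (Fin 2) (Fin 2) ℂ)) + c₂ • (pauliX ⊗ₖ 1)) =
        (c₁ ^ 2) • ((pauliZ ⊗ₖ (1 : Matrix (Fin 2) (Fin 2) ℂ)) * (pauliZ ⊗ₖ 1)) +
        (c₂ ^ 2) • ((pauliX ⊗ₖ (1 : Matrix (Fin 2) (Fin 2) ℂ)) * (pauliX ⊗ₖ 1)) +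
        (c₁ * c₂) • ((pauliZ ⊗ₖ (1 : Matrix (Fin 2) (Fin 2) ℂ)) * (pauliX ⊗ₖ 1) +
          (pauliX ⊗ₖ (1 : Matrix (Fin 2) (Fin 2) ℂ)) * (pauliZ ⊗ₖ 1)) := by
      simp only [add_mul, mul_add, smul_mul_assoc, mul_smul_comm, smul_add, smul_smul]
      module
    rw [expand, e1, e2, e3, smul_zero, add_zero]
    ext i j
    simp [Matrix.one_apply, Complex.real_smul]
    split
    · rw [← Complex.ofReal_pow, ← Complex.ofReal_pow, ← Complex.ofReal_add, h]
      norm_num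
    · simp

lemma witness2 (c₂ c₃ : ℝ) (h : c₂ ^ 2 + c₃ ^ 2 = 1/4) :
    specNorm (Amat 0 c₂ c₃ 0) ≤ 1/2 := by
  unfold Amat
  rw [zero_smul, zero_smul, zero_add, add_zero]
  apply norm_half
  · rw [conjTranspose_add, conjTranspose_smul, conjTranspose_smul]
    congr 1
    · congr 1
      ext ⟨i,j⟩ ⟨k,l⟩
      fin_cases i <;> fin_cases j <;> fin_cases k <;> fin_cases l <;>
        simp [Matrix.conjTranspose_apply, pauliX, Matrix.one_apply]
    · congr 1
      ext ⟨i,j⟩ ⟨k,l⟩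
      fin_cases i <;> fin_cases j <;> fin_cases k <;> fin_cases l <;>
        simp [Matrix.conjTranspose_apply, pauliZ]
  · have e1 : (pauliX ⊗ₖ (1 : Matrix (Fin 2) (Fin 2) ℂ)) * (pauliX ⊗ₖ 1) = 1 := by
      rw [← Matrix.mul_kronecker_mul, XX, mul_one, Matrix.one_kronecker_one]
    have e2 : (pauliZ ⊗ₖ pauliZ) * (pauliZ ⊗ₖ pauliZ) = 1 := by
      rw [← Matrix.mul_kronecker_mul, ZZ, Matrix.one_kronecker_one]
    have e3 : (pauliX ⊗ₖ (1 : Matrix (Fin 2) (Fin 2) ℂ)) * (pauliZ ⊗ₖ pauliZ) +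
        (pauliZ ⊗ₖ pauliZ) * (pauliX ⊗ₖ (1 : Matrix (Fin 2) (Fin 2) ℂ)) = 0 := by
      rw [← Matrix.mul_kronecker_mul, ← Matrix.mul_kronecker_mul, one_mul, mul_one,
        ← Matrix.add_kronecker]
      have : pauliX * pauliZ + pauliZ * pauliX = 0 := by
        rw [add_comm]; exact anticomm
      rw [this, Matrix.zero_kronecker]
    have expand : (c₂ • (pauliX ⊗ₖ (1 : Matrix (Fin 2) (Fin 2) ℂ)) + c₃ • (pauliZ ⊗ₖ pauliZ)) *
        (c₂ • (pauliX ⊗ₖ (1 : Matrix (Fin 2) (Fin 2) ℂ)) + c₃ • (pauliZ ⊗ₖ pauliZ)) =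
        (c₂ ^ 2) • ((pauliX ⊗ₖ (1 : Matrix (Fin 2) (Fin 2) ℂ)) * (pauliX ⊗ₖ 1)) +
        (c₃ ^ 2) • ((pauliZ ⊗ₖ pauliZ) * (pauliZ ⊗ₖ pauliZ)) +
        (c₂ * c₃) • ((pauliX ⊗ₖ (1 : Matrix (Fin 2) (Fin 2) ℂ)) * (pauliZ ⊗ₖ pauliZ) +
          (pauliZ ⊗ₖ pauliZ) * (pauliX ⊗ₖ (1 : Matrix (Fin 2) (Fin 2) ℂ))) := by
      simp only [add_mul, mul_add, smul_mul_assoc, mul_smul_comm, smul_add, smul_smul]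
      module
    rw [expand, e1, e2, e3, smul_zero, add_zero]
    ext i j
    simp [Matrix.one_apply, Complex.real_smul]
    split
    · rw [← Complex.ofReal_pow, ← Complex.ofReal_pow, ← Complex.ofReal_add, h]
      norm_num
    · simp

lemma witness0 : specNorm (Amat 0 0 0 0) ≤ 1/2 := by
  unfold Amat
  simp only [zero_smul, add_zero, zero_add]
  rw [specNorm]
  simp only [map_zero, norm_zero]
  norm_num

end TwoQubitAux

open TwoQubitAux in
/-- Two-qubit noncommuting example with generators `Z₁ = Z ⊗ I`, `X₁ = X ⊗ I`,
`Z₁Z₂ = Z ⊗ Z`: the supremum of `α₁y₁ + α₂y₂ + α₃y₃` over all `y` admitting some `μ` with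
`‖y₁ Z₁ + y₂ X₁ + y₃ Z₁Z₂ + μ I‖ ≤ 1/2` equals `(1/2)√(α₂² + max(|α₁|,|α₃|)²)`. -/
theorem two_qubit_noncommuting (α₁ α₂ α₃ : ℝ) :
    sSup {c : ℝ | ∃ y₁ y₂ y₃ μ : ℝ,
        specNorm (y₁ • (pauliZ ⊗ₖ (1 : Matrix (Fin 2) (Fin 2) ℂ)) +
            y₂ • (pauliX ⊗ₖ (1 : Matrix (Fin 2) (Fin 2) ℂ)) +
            y₃ • (pauliZ ⊗ₖ pauliZ) +
            μ • (1 : Matrix (Fin 2 × Fin 2) (Fin 2 × Fin 2) ℂ)) ≤ 1 / 2 ∧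
        c = α₁ * y₁ + α₂ * y₂ + α₃ * y₃} =
      1 / 2 * Real.sqrt (α₂ ^ 2 + max |α₁| |α₃| ^ 2) := by
  have hub : ∀ c ∈ {c : ℝ | ∃ y₁ y₂ y₃ μ : ℝ,
      specNorm (y₁ • (pauliZ ⊗ₖ (1 : Matrix (Fin 2) (Fin 2) ℂ)) +
          y₂ • (pauliX ⊗ₖ (1 : Matrix (Fin 2) (Fin 2) ℂ)) +
          y₃ • (pauliZ ⊗ₖ pauliZ) +
          μ • (1 : Matrix (Fin 2 × Fin 2) (Fin 2 × Fin 2) ℂ)) ≤ 1 / 2 ∧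
      c = α₁ * y₁ + α₂ * y₂ + α₃ * y₃},
      c ≤ 1 / 2 * Real.sqrt (α₂ ^ 2 + max |α₁| |α₃| ^ 2) := by
    rintro c ⟨y₁, y₂, y₃, μ, hn, rfl⟩
    have hn' : specNorm (Amat y₁ y₂ y₃ μ) ≤ 1/2 := hn
    obtain ⟨hp, hm⟩ := blocks y₁ y₂ y₃ μ hn'
    exact key_ineq α₁ α₂ α₃ y₁ y₂ y₃ hp hm
  apply le_antisymm
  · exact Real.sSup_le hub (by positivity)
  · apply le_csSup ⟨_, hub⟩
    by_cases h0 : α₁ = 0 ∧ α₂ = 0 ∧ α₃ = 0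
    · obtain ⟨rfl, rfl, rfl⟩ := h0
      refine ⟨0, 0, 0, 0, witness0, ?_⟩
      simp
    · have hpos : 0 < α₂ ^ 2 + max |α₁| |α₃| ^ 2 := by
        have h' : α₁ ≠ 0 ∨ α₂ ≠ 0 ∨ α₃ ≠ 0 := by tauto
        rcases h' with h | h | h
        · have := abs_pos.mpr h
          nlinarith [le_max_left |α₁| |α₃|, sq_nonneg α₂, abs_nonneg α₃]
        · nlinarith [sq_nonneg (max |α₁| |α₃|), sq_nonneg α₂, sq_abs α₂, abs_pos.mpr h,
            le_trans (abs_nonneg α₁) (le_max_left |α₁| |α₃|)]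
        · have := abs_pos.mpr h
          nlinarith [le_max_right |α₁| |α₃|, sq_nonneg α₂, abs_nonneg α₁]
      set s := Real.sqrt (α₂ ^ 2 + max |α₁| |α₃| ^ 2) with hsdef
      have hs : 0 < s := Real.sqrt_pos.mpr hpos
      rcases le_or_gt |α₃| |α₁| with hcase | hcase
      · have hs2 : s ^ 2 = α₂ ^ 2 + α₁ ^ 2 := by
          rw [hsdef, Real.sq_sqrt hpos.le, max_eq_left hcase, sq_abs]
        refine ⟨α₁ / (2 * s), α₂ / (2 * s), 0, 0, ?_, ?_⟩
        · apply witness1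
          field_simp
          nlinarith [hs2]
        · field_simp
          nlinarith [hs2]
      · have hs2 : s ^ 2 = α₂ ^ 2 + α₃ ^ 2 := by
          rw [hsdef, Real.sq_sqrt hpos.le, max_eq_right hcase.le, sq_abs]
        refine ⟨0, α₂ / (2 * s), α₃ / (2 * s), 0, ?_, ?_⟩
        · apply witness2
          field_simp
          nlinarith [hs2]
        · field_simp
          nlinarith [hs2]
end
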